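/- For q₁, q₂ in the quaternionic unit disc Δ_ℍ = {q ∈ ℍ : |q| < 1}, set ρ(q₁,q₂) = |q₁ − q₂|·|1 − conj(q₁)·q₂|⁻¹ and δ(q₁,q₂) = (1/2)·log((1 + ρ(q₁,q₂))/(1 − ρ(q₁,q₂))). Then δ is a distance on Δ_ℍ: for all q₁, q₂, q₃ ∈ Δ_ℍ one has ρ(q₁,q₂) < 1, δ(q₁,q₂) ≥ 0, δ(q₁,q₂) = 0 if and only if q₁ = q₂, δ(q₁,q₂) = δ(q₂,q₁), and δ(q₁,q₂) ≤ δ(q₁,q₃) + δ(q₃,q₂). -/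

import Mathlib

/-!
The maps `φ_c(q) = (q - c)(1 - c̄q)⁻¹`, `|c| < 1`, preserve `ρ`, and `|φ_c(q)| = ρ(c, q)`.
From `|1 - āb|² = |a - b|² + (1 - |a|²)(1 - |b|²)` one gets `ρ(a, b) < 1` and
`ρ(a, b) ≤ (|a| + |b|) / (1 + |a||b|)`; applied to `φ_{q₃}(q₁)` and `φ_{q₃}(q₂)` this becomes
`ρ(q₁, q₂) ≤ (x + y) / (1 + xy)` with `x = ρ(q₁, q₃)`, `y = ρ(q₃, q₂)`. Since `δ = artanh ∘ ρ`,
the addition formula `artanh x + artanh y = artanh ((x + y) / (1 + xy))` and monotonicity of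
`artanh` give the triangle inequality.
-/

open scoped Quaternion

/-- The pseudo-hyperbolic ratio on the quaternionic unit disc. -/
noncomputable def rhoH (q₁ q₂ : ℍ[ℝ]) : ℝ := ‖q₁ - q₂‖ * ‖1 - star q₁ * q₂‖⁻¹

/-- The quaternionic Poincaré distance on the unit disc. -/
noncomputable def deltaH (q₁ q₂ : ℍ[ℝ]) : ℝ :=
  (1 / 2) * Real.log ((1 + rhoH q₁ q₂) / (1 - rhoH q₁ q₂))

open Real Set

namespace Real

theorem add_div_one_add_mul_mem_Ioo {x y : ℝ} (hx : x ∈ Ioo (-1) 1) (hy : y ∈ Ioo (-1) 1) :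
    (x + y) / (1 + x * y) ∈ Ioo (-1) 1 := by
  obtain ⟨hx₀, hx₁⟩ := hx
  obtain ⟨hy₀, hy₁⟩ := hy
  have h : 0 < 1 + x * y := by nlinarith
  constructor
  · rw [lt_div_iff₀ h]; nlinarith
  · rw [div_lt_one h]; nlinarith

theorem artanh_add {x y : ℝ} (hx : x ∈ Ioo (-1) 1) (hy : y ∈ Ioo (-1) 1) :
    artanh x + artanh y = artanh ((x + y) / (1 + x * y)) := by
  have hs := add_div_one_add_mul_mem_Ioo hx hy
  obtain ⟨hx₀, hx₁⟩ := hx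
  obtain ⟨hy₀, hy₁⟩ := hy
  have hxy : 1 + x * y ≠ 0 := by nlinarith
  have hx : 0 < (1 + x) / (1 - x) := div_pos (by linarith) (by linarith)
  have hy : 0 < (1 + y) / (1 - y) := div_pos (by linarith) (by linarith)
  rw [artanh_eq_half_log ⟨hx₀.le, hx₁.le⟩, artanh_eq_half_log ⟨hy₀.le, hy₁.le⟩,
    artanh_eq_half_log (Ioo_subset_Icc_self hs), ← mul_add, ← log_mul hx.ne' hy.ne',
    div_mul_div_comm, one_add_div hxy, one_sub_div hxy, div_div_div_cancel_right₀ hxy]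
  congr 3 <;> ring

end Real

namespace Quaternion

theorem norm_one_sub_mul_comm (p q : ℍ[ℝ]) : ‖1 - p * q‖ = ‖1 - q * p‖ := by
  rcases eq_or_ne p 0 with rfl | hp
  · simp
  have : 1 - q * p = p⁻¹ * (1 - p * q) * p := by
    rw [mul_sub, sub_mul, mul_one, inv_mul_cancel₀ hp, ← mul_assoc, inv_mul_cancel₀ hp, one_mul]
  rw [this, norm_mul, norm_mul, norm_inv]
  field_simp

theorem one_sub_star_mul_ne_zero {a b : ℍ[ℝ]} (ha : ‖a‖ < 1) (hb : ‖b‖ < 1) :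
    1 - star a * b ≠ 0 := by
  refine sub_ne_zero.2 fun h ↦ ?_
  have := congrArg norm h
  rw [norm_one, norm_mul, norm_star] at this
  nlinarith [norm_nonneg a, norm_nonneg b]

theorem sq_norm_one_sub_star_mul (a b : ℍ[ℝ]) :
    ‖1 - star a * b‖ ^ 2 = ‖a - b‖ ^ 2 + (1 - ‖a‖ ^ 2) * (1 - ‖b‖ ^ 2) := by
  simp only [sq, ← normSq_eq_norm_mul_self, normSq_def', re_sub, re_one, re_mul, re_star,
    imI_sub, imI_one, imI_mul, imI_star, imJ_sub, imJ_one, imJ_mul, imJ_star,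
    imK_sub, imK_one, imK_mul, imK_star]
  ring

theorem one_sub_mul_star_mul_sub_comm (a c : ℍ[ℝ]) :
    (1 - a * star c) * (a - c) = (a - c) * (1 - star c * a) := by
  have h₁ : c * star c * a = ((normSq c : ℝ) : ℍ[ℝ]) * a := by rw [self_mul_star]
  have h₂ : a * star c * c = ((normSq c : ℝ) : ℍ[ℝ]) * a := by
    rw [mul_assoc, star_mul_self, coe_commutes]
  linear_combination (norm := noncomm_ring) h₂ - h₁

theorem sub_mul_one_sub_star_mul_sub (a b c : ℍ[ℝ]) :
    (a - c) * (1 - star c * b) - (1 - a * star c) * (b - c)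
      = ((1 - normSq c : ℝ) : ℍ[ℝ]) * (a - b) := by
  have h₁ : c * star c * b = ((normSq c : ℝ) : ℍ[ℝ]) * b := by rw [self_mul_star]
  have h₂ : a * star c * c = ((normSq c : ℝ) : ℍ[ℝ]) * a := by
    rw [mul_assoc, star_mul_self, coe_commutes]
  push_cast
  linear_combination (norm := noncomm_ring) h₁ - h₂

theorem one_sub_star_mul_mul_sub_star_mul_sub (a b c : ℍ[ℝ]) :
    (1 - star a * c) * (1 - star c * b) - (star a - star c) * (b - c)
      = ((1 - normSq c : ℝ) : ℍ[ℝ]) * (1 - star a * b) := by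
  have h₁ : star c * c = ((normSq c : ℝ) : ℍ[ℝ]) := star_mul_self c
  have h₂ : star a * c * star c * b = ((normSq c : ℝ) : ℍ[ℝ]) * (star a * b) := by
    rw [mul_assoc (star a), self_mul_star, ← mul_assoc, ← coe_commutes, mul_assoc]
  push_cast
  linear_combination (norm := noncomm_ring) h₂ - h₁

end Quaternion

section PseudoHyperbolic

variable {a b c : ℍ[ℝ]}

theorem rhoH_nonneg (a b : ℍ[ℝ]) : 0 ≤ rhoH a b := by
  unfold rhoH; positivity

theorem rhoH_comm (a b : ℍ[ℝ]) : rhoH a b = rhoH b a := by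
  rw [rhoH, rhoH, norm_sub_rev, ← norm_star (1 - star a * b)]
  simp only [star_sub, star_one, star_mul, star_star]

theorem rhoH_eq_zero_iff (ha : ‖a‖ < 1) (hb : ‖b‖ < 1) : rhoH a b = 0 ↔ a = b := by
  simp [rhoH, Quaternion.one_sub_star_mul_ne_zero ha hb, sub_eq_zero]

theorem rhoH_lt_one (ha : ‖a‖ < 1) (hb : ‖b‖ < 1) : rhoH a b < 1 := by
  have hD := norm_pos_iff.2 (Quaternion.one_sub_star_mul_ne_zero ha hb)
  have hP : 0 < (1 - ‖a‖ ^ 2) * (1 - ‖b‖ ^ 2) := by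
    apply mul_pos <;> nlinarith [norm_nonneg a, norm_nonneg b]
  rw [rhoH, mul_inv_lt_iff₀ hD, one_mul,
    ← pow_lt_pow_iff_left₀ (norm_nonneg _) hD.le two_ne_zero, Quaternion.sq_norm_one_sub_star_mul]
  linarith

theorem rhoH_le_norm_add_norm_div (ha : ‖a‖ < 1) (hb : ‖b‖ < 1) :
    rhoH a b ≤ (‖a‖ + ‖b‖) / (1 + ‖a‖ * ‖b‖) := by
  set x := ‖a‖
  set y := ‖b‖
  set D := ‖1 - star a * b‖
  have hx : 0 ≤ x := norm_nonneg a
  have hy : 0 ≤ y := norm_nonneg b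
  have hD : 0 < D := norm_pos_iff.2 (Quaternion.one_sub_star_mul_ne_zero ha hb)
  have hD_le : D ≤ 1 + x * y := by
    simpa [x, y, D, norm_mul, norm_star] using norm_sub_le (1 : ℍ[ℝ]) (star a * b)
  -- `(1 + x y)² - (x + y)² = (1 - x²)(1 - y²)`, which is also `D² - ‖a - b‖²`
  have key : ((x + y) * D) ^ 2 - (‖a - b‖ * (1 + x * y)) ^ 2
      = (1 - x ^ 2) * (1 - y ^ 2) * ((1 + x * y) ^ 2 - D ^ 2) := by
    linear_combination (1 + x * y) ^ 2 * Quaternion.sq_norm_one_sub_star_mul a b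
  have hP : 0 ≤ (1 - x ^ 2) * (1 - y ^ 2) * ((1 + x * y) ^ 2 - D ^ 2) := by
    apply mul_nonneg (mul_nonneg _ _) <;> nlinarith
  rw [rhoH, ← div_eq_mul_inv, div_le_div_iff₀ hD (by positivity),
    ← pow_le_pow_iff_left₀ (by positivity) (by positivity) two_ne_zero]
  linarith

noncomputable def mobiusH (c q : ℍ[ℝ]) : ℍ[ℝ] := (q - c) * (1 - star c * q)⁻¹

theorem norm_mobiusH (c q : ℍ[ℝ]) : ‖mobiusH c q‖ = rhoH c q := by
  rw [mobiusH, rhoH, norm_mul, norm_inv, norm_sub_rev]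

theorem one_sub_mul_star_mul_mobiusH (h : 1 - star c * a ≠ 0) :
    (1 - a * star c) * mobiusH c a = a - c := by
  rw [mobiusH, ← mul_assoc, Quaternion.one_sub_mul_star_mul_sub_comm, mul_inv_cancel_right₀ h]

theorem one_sub_star_mul_mul_star_mobiusH (h : 1 - star c * a ≠ 0) :
    (1 - star a * c) * star (mobiusH c a) = star a - star c := by
  have h' : star (1 - star c * a) = 1 - star a * c := by simp
  rw [← h', ← star_mul, mobiusH, inv_mul_cancel_right₀ h, star_sub]

theorem mobiusH_mul_one_sub_star_mul (h : 1 - star c * a ≠ 0) :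
    mobiusH c a * (1 - star c * a) = a - c :=
  inv_mul_cancel_right₀ h _

theorem rhoH_mobiusH (hc : ‖c‖ < 1) (ha : ‖a‖ < 1) (hb : ‖b‖ < 1) :
    rhoH (mobiusH c a) (mobiusH c b) = rhoH a b := by
  set A := mobiusH c a
  set B := mobiusH c b
  set k : ℍ[ℝ] := ((1 - Quaternion.normSq c : ℝ) : ℍ[ℝ])
  have hca := Quaternion.one_sub_star_mul_ne_zero hc ha
  have hcb := Quaternion.one_sub_star_mul_ne_zero hc hb
  have hnum : (1 - a * star c) * (A - B) * (1 - star c * b) = k * (a - b) := by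
    rw [mul_sub (1 - a * star c) A B, sub_mul, one_sub_mul_star_mul_mobiusH hca, mul_assoc,
      mobiusH_mul_one_sub_star_mul hcb]
    exact Quaternion.sub_mul_one_sub_star_mul_sub a b c
  have hden : (1 - star a * c) * (1 - star A * B) * (1 - star c * b) = k * (1 - star a * b) := by
    rw [mul_sub (1 - star a * c) 1 (star A * B), mul_one, sub_mul, ← mul_assoc _ (star A) B,
      one_sub_star_mul_mul_star_mobiusH hca, mul_assoc, mobiusH_mul_one_sub_star_mul hcb]
    exact Quaternion.one_sub_star_mul_mul_sub_star_mul_sub a b c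
  have hk : ‖k‖ ≠ 0 := by
    rw [Quaternion.norm_coe, norm_ne_zero_iff, sub_ne_zero, ne_comm,
      Quaternion.normSq_eq_norm_mul_self]
    exact (by nlinarith [norm_nonneg c] : ‖c‖ * ‖c‖ < 1).ne
  have hm : ‖1 - a * star c‖ = ‖1 - star a * c‖ := by
    rw [Quaternion.norm_one_sub_mul_comm, ← norm_star]
    simp
  have hac := Quaternion.one_sub_star_mul_ne_zero ha hc
  calc rhoH A B
      = ‖(1 - a * star c) * (A - B) * (1 - star c * b)‖
          * ‖(1 - star a * c) * (1 - star A * B) * (1 - star c * b)‖⁻¹ := by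
        simp only [rhoH, norm_mul, hm]
        field_simp [norm_ne_zero_iff.2 hac, norm_ne_zero_iff.2 hcb]
    _ = rhoH a b := by
        rw [hnum, hden, rhoH, norm_mul, norm_mul]
        field_simp [hk]

theorem rhoH_le_rhoH_add_rhoH_div (ha : ‖a‖ < 1) (hb : ‖b‖ < 1) (hc : ‖c‖ < 1) :
    rhoH a b ≤ (rhoH a c + rhoH c b) / (1 + rhoH a c * rhoH c b) := by
  have hA : ‖mobiusH c a‖ < 1 := by rw [norm_mobiusH]; exact rhoH_lt_one hc ha
  have hB : ‖mobiusH c b‖ < 1 := by rw [norm_mobiusH]; exact rhoH_lt_one hc hb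
  simpa only [rhoH_mobiusH hc ha hb, norm_mobiusH, rhoH_comm c a] using
    rhoH_le_norm_add_norm_div hA hB

theorem rhoH_mem_Ioo (ha : ‖a‖ < 1) (hb : ‖b‖ < 1) : rhoH a b ∈ Ioo (-1) 1 :=
  ⟨by linarith [rhoH_nonneg a b], rhoH_lt_one ha hb⟩

theorem deltaH_eq_artanh (ha : ‖a‖ < 1) (hb : ‖b‖ < 1) : deltaH a b = artanh (rhoH a b) :=
  (artanh_eq_half_log (Ioo_subset_Icc_self (rhoH_mem_Ioo ha hb))).symm

theorem deltaH_nonneg (ha : ‖a‖ < 1) (hb : ‖b‖ < 1) : 0 ≤ deltaH a b := by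
  rw [deltaH_eq_artanh ha hb]
  exact artanh_nonneg (rhoH_nonneg a b)

theorem deltaH_eq_zero_iff (ha : ‖a‖ < 1) (hb : ‖b‖ < 1) : deltaH a b = 0 ↔ a = b := by
  rw [deltaH_eq_artanh ha hb, ← artanh_zero,
    artanh_injOn.eq_iff (rhoH_mem_Ioo ha hb) (by norm_num), rhoH_eq_zero_iff ha hb]

theorem deltaH_comm (a b : ℍ[ℝ]) : deltaH a b = deltaH b a := by
  rw [deltaH, deltaH, rhoH_comm]

theorem deltaH_le_add (ha : ‖a‖ < 1) (hb : ‖b‖ < 1) (hc : ‖c‖ < 1) :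
    deltaH a b ≤ deltaH a c + deltaH c b := by
  have hac := rhoH_mem_Ioo ha hc
  have hcb := rhoH_mem_Ioo hc hb
  rw [deltaH_eq_artanh ha hb, deltaH_eq_artanh ha hc, deltaH_eq_artanh hc hb,
    artanh_add hac hcb]
  exact artanh_le_artanh (rhoH_mem_Ioo ha hb).1 (add_div_one_add_mul_mem_Ioo hac hcb).2
    (rhoH_le_rhoH_add_rhoH_div ha hb hc)

end PseudoHyperbolic

/-- The quaternionic Poincaré distance is a distance on the unit disc `Δ_ℍ`. -/
theorem deltaH_is_distance :
    ∀ q₁ ∈ {q : ℍ[ℝ] | ‖q‖ < 1}, ∀ q₂ ∈ {q : ℍ[ℝ] | ‖q‖ < 1},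
      ∀ q₃ ∈ {q : ℍ[ℝ] | ‖q‖ < 1},
    rhoH q₁ q₂ < 1 ∧
    0 ≤ deltaH q₁ q₂ ∧
    (deltaH q₁ q₂ = 0 ↔ q₁ = q₂) ∧
    deltaH q₁ q₂ = deltaH q₂ q₁ ∧
    deltaH q₁ q₂ ≤ deltaH q₁ q₃ + deltaH q₃ q₂ := by
  intro q₁ h₁ q₂ h₂ q₃ h₃
  exact ⟨rhoH_lt_one h₁ h₂, deltaH_nonneg h₁ h₂, deltaH_eq_zero_iff h₁ h₂, deltaH_comm q₁ q₂,
    deltaH_le_add h₁ h₂ h₃⟩
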